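/- arXiv:2107.01841 — 3 statements merged into one kernel-verified Lean document; each statement's English description precedes it below -/
import Mathlib

section
/- The exact set of solutions (u₁,u₂) with u₁ > 0 and u₂ > 0 of the system 0 = (4/5)u₁ + (1/5)u₂ - (1/10)u₁(u₁+9u₂), 0 = (1/5)u₁ + (4/5)u₂ - (1/10)u₂(9u₁+u₂) is {(1,1), (3-√(15/2), 3+√(15/2)), (3+√(15/2), 3-√(15/2))}. -/
theorem stmt_4 :
    {u : ℝ × ℝ | 0 < u.1 ∧ 0 < u.2 ∧
      (4/5) * u.1 + (1/5) * u.2 - (1/10) * u.1 * (u.1 + 9 * u.2) = 0 ∧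
      (1/5) * u.1 + (4/5) * u.2 - (1/10) * u.2 * (9 * u.1 + u.2) = 0} =
    {((1 : ℝ), (1 : ℝ)), (3 - Real.sqrt (15/2), 3 + Real.sqrt (15/2)),
      (3 + Real.sqrt (15/2), 3 - Real.sqrt (15/2))} := by
  have hs2 : Real.sqrt (15/2) ^ 2 = 15/2 := Real.sq_sqrt (by norm_num)
  have hsnn : (0:ℝ) ≤ Real.sqrt (15/2) := Real.sqrt_nonneg _
  have hs3 : Real.sqrt (15/2) < 3 := by nlinarith
  ext ⟨x, y⟩
  simp only [Set.mem_setOf_eq, Set.mem_insert_iff, Set.mem_singleton_iff, Prod.mk.injEq]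
  constructor
  · rintro ⟨hx, hy, h1, h2⟩
    have key : (x - y) * (6 - (x + y)) = 0 := by nlinarith [h1, h2]
    rcases mul_eq_zero.1 key with h | h
    · have hxy : x = y := by linarith
      left
      have : x * (1 - x) = 0 := by nlinarith
      rcases mul_eq_zero.1 this with h' | h'
      · exact absurd h' (ne_of_gt hx)
      · constructor <;> [skip; rw [← hxy]] <;> linarith
    · have hsum : y = 6 - x := by linarith
      subst hsum
      have hq : (x - (3 - Real.sqrt (15/2))) * (x - (3 + Real.sqrt (15/2))) = 0 := by
        nlinarith [h1]
      rcases mul_eq_zero.1 hq with h' | h'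
      · right; left; constructor <;> linarith
      · right; right; constructor <;> linarith
  · rintro (⟨hx, hy⟩ | ⟨hx, hy⟩ | ⟨hx, hy⟩) <;> subst hx <;> subst hy
    · refine ⟨by norm_num, by norm_num, by norm_num, by norm_num⟩
    · exact ⟨by linarith, by linarith, by linear_combination (4/5) * hs2,
        by linear_combination (4/5) * hs2⟩
    · exact ⟨by linarith, by linarith, by linear_combination (4/5) * hs2,
        by linear_combination (4/5) * hs2⟩
end

section
/- For n = 2, with b₁(u₁,u₂) = (1/10)u₁(u₁+9u₂) and b₂(u₁,u₂) = (1/10)u₂(9u₁+u₂), for every M > 0 there exist vectors 0 ≪ u₂ ≤ u₁ (componentwise, with u₂ strictly positive) such that M·u₁ - b(u₁) - M·u₂ + b(u₂) is not componentwise nonnegative. Concretely one may take u₂ = (1,1) and u₁ = (1+ε,1) for any ε > 0. -/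
theorem stmt_7 :
    ∀ M > (0 : ℝ), ∃ u₁ u₂ : ℝ × ℝ,
      0 < u₂.1 ∧ 0 < u₂.2 ∧ u₂.1 ≤ u₁.1 ∧ u₂.2 ≤ u₁.2 ∧
      ¬((0 ≤ (M * u₁.1 - (1/10) * u₁.1 * (u₁.1 + 9 * u₁.2))
            - (M * u₂.1 - (1/10) * u₂.1 * (u₂.1 + 9 * u₂.2))) ∧
        (0 ≤ (M * u₁.2 - (1/10) * u₁.2 * (9 * u₁.1 + u₁.2))
            - (M * u₂.2 - (1/10) * u₂.2 * (9 * u₂.1 + u₂.2)))) := by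
  intro M _
  refine ⟨(2, 1), (1, 1), by norm_num, by norm_num, by norm_num, le_refl _, ?_⟩
  rintro ⟨-, h⟩
  norm_num at h
end

section
/- Every constant positive solution (u₁,u₂) of the counterexample system 0 = (4/5)u₁+(1/5)u₂-(1/10)u₁(u₁+9u₂), 0 = (1/5)u₁+(4/5)u₂-(1/10)u₂(9u₁+u₂) satisfies either u₁ + u₂ = 2 or u₁ + u₂ = 6. -/
theorem stmt_18 (u₁ u₂ : ℝ) (h₁ : 0 < u₁) (h₂ : 0 < u₂)
    (e₁ : (4/5) * u₁ + (1/5) * u₂ - (1/10) * u₁ * (u₁ + 9 * u₂) = 0)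
    (e₂ : (1/5) * u₁ + (4/5) * u₂ - (1/10) * u₂ * (9 * u₁ + u₂) = 0) :
    u₁ + u₂ = 2 ∨ u₁ + u₂ = 6 := by
  have key : (u₁ - u₂) * (6 - (u₁ + u₂)) = 0 := by nlinarith [sq_nonneg (u₁ - u₂)]
  rcases mul_eq_zero.mp key with h | h
  · left
    have hu : u₁ = u₂ := by linarith
    subst hu
    have : u₁ * (1 - u₁) = 0 := by nlinarith
    rcases mul_eq_zero.mp this with h' | h'
    · linarith
    · linarith
  · right; linarith
end
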